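/- Quiescence of graded king consensus under agreement. Assume n > 3t. Consider the four-round graded king consensus protocol, which prescribes: (round 1) a correct node w with ℓ_w = some u sends x_w to node u and nothing to other nodes, and a correct node with ℓ_w = none sends nothing; (round 2) a correct node w sends x_w to all nodes iff ℓ_w = some w and it received the value x_w from at least n − t nodes in round 1; (round 3) a correct node v with ℓ_v = some ℓ' sends to all nodes the value c it received from ℓ' in round 2, provided c ≠ x_v, and otherwise sends nothing; (round 4) a correct node w sends x_w to exactly those nodes from which it received the value x_w in round 3. Suppose there are x ∈ 𝒱 and L ∈ Option (Fin n) with (x_v, ℓ_v) = (x, L) for all v ∈ H, where either L = none or L = some ℓ with ℓ ∈ H. Then in every execution, every correct node v with L ≠ some v sends no messages in rounds 2 and 3, sends messages in round 4 only to nodes outside H, and in round 1 sends a message only to ℓ (if L = some ℓ) or to nobody (if L = none). -/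

import Mathlib

/-!
Under agreement, a correct leader can only broadcast the common input `c₀` in round 2, so no
correct node ever receives from its leader a value different from its own input: round 3 is
silent. Round 4 only answers round-3 messages, so it is silent towards correct nodes, and a
correct node that is not its own leader never sets `h = 1`, so it is silent in round 2.
-/

/-- Number of distinct senders from which a node received the message `c`
(`recv u` is the message received from node `u`). -/
def recvCount {n : ℕ} {M : Type*} [DecidableEq M]
    (recv : Fin n → Option M) (c : M) : ℕ :=
  (Finset.univ.filter fun u => recv u = some c).card

theorem graded_king_consensus_quiescence
    {n t : ℕ} {𝒱 : Type*} [DecidableEq 𝒱]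
    (H : Finset (Fin n))
    (x : Fin n → 𝒱) (ℓ : Fin n → Option (Fin n))
    (recv1 recv2 recv3 recv4 : Fin n → Fin n → Option 𝒱)
    (h : Fin n → Fin 2)
    -- round 1: a correct node sends its input to its leader only
    (h1 : ∀ v : Fin n, ∀ w ∈ H, recv1 v w = if ℓ w = some v then some (x w) else none)
    -- a correct node sets h = 1 iff it is its own leader and received its input n − t times
    (hh : ∀ w ∈ H, (h w = 1 ↔ (ℓ w = some w ∧ n - t ≤ recvCount (recv1 w) (x w))))
    -- round 2: a correct node sends its input to all nodes iff h = 1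
    (h2 : ∀ v : Fin n, ∀ w ∈ H, recv2 v w = if h w = 1 then some (x w) else none)
    -- round 3: a correct node forwards the value received from its leader in round 2
    -- to all nodes, provided it differs from its own input; otherwise it is silent
    (h3 : ∀ u : Fin n, ∀ v ∈ H, recv3 u v =
      match ℓ v with
      | none => none
      | some ℓ' =>
        match recv2 v ℓ' with
        | none => none
        | some c => if c = x v then none else some c)
    -- round 4: a correct node sends its input exactly to those nodes from which
    -- it received its input in round 3
    (h4 : ∀ v : Fin n, ∀ w ∈ H, recv4 v w =
      if recv3 w v = some (x w) then some (x w) else none)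
    -- all correct nodes agree on their input value and leader pointer
    (c₀ : 𝒱) (L : Option (Fin n))
    (hagree : ∀ v ∈ H, x v = c₀ ∧ ℓ v = L)
    -- the common leader pointer is absent or points to a correct node
    (hL : L = none ∨ ∃ ℓ₀ ∈ H, L = some ℓ₀) :
    ∀ v ∈ H, L ≠ some v →
      -- v sends nothing in round 2
      (∀ u : Fin n, recv2 u v = none) ∧
      -- v sends nothing in round 3
      (∀ u : Fin n, recv3 u v = none) ∧
      -- v sends round-4 messages only to faulty nodes
      (∀ u ∈ H, recv4 u v = none) ∧
      -- v sends a round-1 message only to the leader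
      (∀ u : Fin n, recv1 u v ≠ none → L = some u) := by
  have round2_sends_c₀ : ∀ u, ∀ w ∈ H, recv2 u w = none ∨ recv2 u w = some c₀ := by
    intro u w hw
    rw [h2 u w hw, (hagree w hw).1]
    split_ifs <;> simp
  have round3_silent : ∀ u, ∀ w ∈ H, recv3 u w = none := by
    intro u w hw
    rw [h3 u w hw, (hagree w hw).1, (hagree w hw).2]
    obtain rfl | ⟨ℓ₀, hℓ₀, rfl⟩ := hL
    · rfl
    · obtain hc | hc := round2_sends_c₀ w ℓ₀ hℓ₀ <;> simp [hc]
  intro v hv hLv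
  refine ⟨fun u => ?_, fun u => round3_silent u v hv, fun u hu => ?_, fun u hu => ?_⟩
  · have hv₁ : h v ≠ 1 := fun hv₁ => hLv ((hagree v hv).2 ▸ ((hh v hv).1 hv₁).1)
    simp [h2 u v hv, hv₁]
  · simp [h4 u v hv, round3_silent v u hu]
  · rw [h1 u v hv, (hagree v hv).2] at hu
    by_contra hLu
    simp [hLu] at hu
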